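/- arXiv:2502.02510 — 2 statements merged into one kernel-verified Lean document; each statement's English description precedes it below -/
import Mathlib

section
/- Let m₁ < m₂ be positive integers and define the cubic A(y) = a₀ + a₁y + a₂y² + a₃y³ with a₀ = 4(m₁−m₂)(4(m₁²+m₂²) − 13(m₁+m₂) + 12), a₁ = 4(8(m₁³+m₂³) − 23(m₁²+m₂²) − 6m₁m₂ + 24(m₁+m₂)), a₂ = 4(m₁−m₂)(4(m₁²+m₂²) + 8m₁m₂ − 7(m₁+m₂) + 12), a₃ = 12(m₁+m₂)². Then A(1) > 0 and A(−1) < 0, so A has at least one root in (−1, 1). -/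
theorem stmt_17 (m₁ m₂ : ℕ) (h₁ : 0 < m₁) (h₁₂ : m₁ < m₂)
    (A : ℝ → ℝ)
    (hA : ∀ y : ℝ, A y =
      4 * ((m₁ : ℝ) - m₂) * (4 * ((m₁ : ℝ) ^ 2 + (m₂ : ℝ) ^ 2) - 13 * ((m₁ : ℝ) + m₂) + 12)
      + 4 * (8 * ((m₁ : ℝ) ^ 3 + (m₂ : ℝ) ^ 3) - 23 * ((m₁ : ℝ) ^ 2 + (m₂ : ℝ) ^ 2)
          - 6 * (m₁ : ℝ) * m₂ + 24 * ((m₁ : ℝ) + m₂)) * y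
      + 4 * ((m₁ : ℝ) - m₂) * (4 * ((m₁ : ℝ) ^ 2 + (m₂ : ℝ) ^ 2) + 8 * (m₁ : ℝ) * m₂
          - 7 * ((m₁ : ℝ) + m₂) + 12) * y ^ 2
      + 12 * ((m₁ : ℝ) + m₂) ^ 2 * y ^ 3) :
    0 < A 1 ∧ A (-1) < 0 ∧ ∃ y ∈ Set.Ioo (-1 : ℝ) 1, A y = 0 := by
  have hx1 : (1 : ℝ) ≤ (m₁ : ℝ) := by exact_mod_cast h₁
  have hx2 : (1 : ℝ) ≤ (m₂ : ℝ) := by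
    have : 0 < m₂ := lt_trans h₁ h₁₂
    exact_mod_cast this
  have hA1 : A 1 = 32 * (m₁ : ℝ) * (2 * (m₁ : ℝ) ^ 2 - 5 * (m₁ : ℝ) + 6) := by
    rw [hA]; ring
  have hAm1 : A (-1) = -(32 * (m₂ : ℝ) * (2 * (m₂ : ℝ) ^ 2 - 5 * (m₂ : ℝ) + 6)) := by
    rw [hA]; ring
  have hpos : 0 < A 1 := by rw [hA1]; nlinarith [sq_nonneg ((m₁ : ℝ) - 2)]
  have hneg : A (-1) < 0 := by rw [hAm1]; nlinarith [sq_nonneg ((m₂ : ℝ) - 2)]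
  refine ⟨hpos, hneg, ?_⟩
  have hcont : ContinuousOn A (Set.Icc (-1 : ℝ) 1) := by
    have : Continuous A := by
      have : A = fun y =>
        4 * ((m₁ : ℝ) - m₂) * (4 * ((m₁ : ℝ) ^ 2 + (m₂ : ℝ) ^ 2) - 13 * ((m₁ : ℝ) + m₂) + 12)
        + 4 * (8 * ((m₁ : ℝ) ^ 3 + (m₂ : ℝ) ^ 3) - 23 * ((m₁ : ℝ) ^ 2 + (m₂ : ℝ) ^ 2)
            - 6 * (m₁ : ℝ) * m₂ + 24 * ((m₁ : ℝ) + m₂)) * y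
        + 4 * ((m₁ : ℝ) - m₂) * (4 * ((m₁ : ℝ) ^ 2 + (m₂ : ℝ) ^ 2) + 8 * (m₁ : ℝ) * m₂
            - 7 * ((m₁ : ℝ) + m₂) + 12) * y ^ 2
        + 12 * ((m₁ : ℝ) + m₂) ^ 2 * y ^ 3 := funext hA
      rw [this]; continuity
    exact this.continuousOn
  have hsub := intermediate_value_Ioo (by norm_num : (-1 : ℝ) ≤ 1) hcont
  have h0 : (0 : ℝ) ∈ Set.Ioo (A (-1)) (A 1) := ⟨hneg, hpos⟩
  obtain ⟨y, hy, hy0⟩ := hsub h0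
  exact ⟨y, hy, hy0⟩
end

section
/- Let m₁ < m₂ be positive integers and let A(y) be the cubic with coefficients a₀ = 4(m₁−m₂)(4(m₁²+m₂²) − 13(m₁+m₂) + 12), a₁ = 4(8(m₁³+m₂³) − 23(m₁²+m₂²) − 6m₁m₂ + 24(m₁+m₂)), a₂ = 4(m₁−m₂)(4(m₁²+m₂²) + 8m₁m₂ − 7(m₁+m₂) + 12), a₃ = 12(m₁+m₂)². Then A has exactly one root in the open interval (−1, 1). -/
lemma cubic_two_roots_false (a0 a1 a2 a3 y1 y2 : ℝ) (ha3 : 0 < a3)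
    (h1 : a0 + a1 * y1 + a2 * y1 ^ 2 + a3 * y1 ^ 3 = 0)
    (h2 : a0 + a1 * y2 + a2 * y2 ^ 2 + a3 * y2 ^ 3 = 0)
    (hy2 : y2 < 1) (hlt : y1 < y2)
    (hS : 0 < a0 + a1 + a2 + a3)
    (hcase : a2 + 3 * a3 ≤ 0 ∨ a2 ^ 2 < 3 * a1 * a3) : False := by
  have hne : y2 - y1 ≠ 0 := sub_ne_zero.mpr hlt.ne'
  rcases hcase with hc | hc
  · have key : (y2 - y1) * ((a0 + a1 + a2 + a3)
        - (1 - y1) * (1 - y2) * (a2 + a3 * (1 + y1 + y2))) = 0 := by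
      linear_combination (y2 - 1) * h1 + (1 - y1) * h2
    have hfac : a0 + a1 + a2 + a3 = (1 - y1) * (1 - y2) * (a2 + a3 * (1 + y1 + y2)) := by
      have := (mul_eq_zero.mp key).resolve_left hne
      linarith [sub_eq_zero.mp this]
    have h1y1 : 0 < 1 - y1 := by linarith
    have h1y2 : 0 < 1 - y2 := by linarith
    have hpos : 0 < a2 + a3 * (1 + y1 + y2) := by
      by_contra h
      push_neg at h
      nlinarith [mul_pos h1y1 h1y2]
    nlinarith [mul_pos ha3 (show 0 < 2 - (y1 + y2) by linarith)]
  · have hE : (y2 - y1) * (a1 + a2 * (y1 + y2) + a3 * (y1 ^ 2 + y1 * y2 + y2 ^ 2)) = 0 := by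
      linear_combination h2 - h1
    have hE' : a1 + a2 * (y1 + y2) + a3 * (y1 ^ 2 + y1 * y2 + y2 ^ 2) = 0 :=
      (mul_eq_zero.mp hE).resolve_left hne
    have hE12 : 12 * a3 * (a1 + a2 * (y1 + y2) + a3 * (y1 ^ 2 + y1 * y2 + y2 ^ 2)) = 0 := by
      rw [hE']; ring
    nlinarith [hE12, sq_nonneg (3 * a3 * (y1 + y2) + 2 * a2),
      mul_nonneg (mul_nonneg ha3.le ha3.le) (sq_nonneg (y1 - y2)), mul_pos ha3 ha3]

lemma lemS (p q : ℝ) (hp : 1 ≤ p) :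
    0 < 4 * (p - q) * (4 * (p ^ 2 + q ^ 2) - 13 * (p + q) + 12)
      + 4 * (8 * (p ^ 3 + q ^ 3) - 23 * (p ^ 2 + q ^ 2) - 6 * p * q + 24 * (p + q))
      + 4 * (p - q) * (4 * (p ^ 2 + q ^ 2) + 8 * p * q - 7 * (p + q) + 12)
      + 12 * (p + q) ^ 2 := by
  have hu : (0:ℝ) ≤ p - 1 := by linarith
  have hid : 4 * (p - q) * (4 * (p ^ 2 + q ^ 2) - 13 * (p + q) + 12)
      + 4 * (8 * (p ^ 3 + q ^ 3) - 23 * (p ^ 2 + q ^ 2) - 6 * p * q + 24 * (p + q))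
      + 4 * (p - q) * (4 * (p ^ 2 + q ^ 2) + 8 * p * q - 7 * (p + q) + 12)
      + 12 * (p + q) ^ 2
      = 96 + 64 * (p - 1) + 32 * (p - 1) ^ 2 + 64 * (p - 1) ^ 3 := by ring
  rw [hid]
  have h2 := pow_nonneg hu 2
  have h3 := pow_nonneg hu 3
  linarith

lemma lemNeg (p q : ℝ) (hp : 1 ≤ p) (hq : p + 1 ≤ q) :
    4 * (p - q) * (4 * (p ^ 2 + q ^ 2) - 13 * (p + q) + 12)
      - 4 * (8 * (p ^ 3 + q ^ 3) - 23 * (p ^ 2 + q ^ 2) - 6 * p * q + 24 * (p + q))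
      + 4 * (p - q) * (4 * (p ^ 2 + q ^ 2) + 8 * p * q - 7 * (p + q) + 12)
      - 12 * (p + q) ^ 2 < 0 := by
  have hp0 : (0:ℝ) ≤ p := by linarith
  have ht : (0:ℝ) ≤ q - p - 1 := by linarith
  have hid : 4 * (p - q) * (4 * (p ^ 2 + q ^ 2) - 13 * (p + q) + 12)
      - 4 * (8 * (p ^ 3 + q ^ 3) - 23 * (p ^ 2 + q ^ 2) - 6 * p * q + 24 * (p + q))
      + 4 * (p - q) * (4 * (p ^ 2 + q ^ 2) + 8 * p * q - 7 * (p + q) + 12)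
      - 12 * (p + q) ^ 2
      = -(96 + 64 * (q - p - 1) + 32 * (q - p - 1) ^ 2 + 64 * (q - p - 1) ^ 3
        + 64 * p + 64 * (p * (q - p - 1)) + 192 * (p * (q - p - 1) ^ 2)
        + 32 * p ^ 2 + 192 * (p ^ 2 * (q - p - 1)) + 64 * p ^ 3) := by ring
  rw [hid]
  have m1 := pow_nonneg ht 2
  have m2 := pow_nonneg ht 3
  have m3 := mul_nonneg hp0 ht
  have m4 := mul_nonneg hp0 (pow_nonneg ht 2)
  have m5 := mul_nonneg (pow_nonneg hp0 2) ht
  have m6 := pow_nonneg hp0 2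
  have m7 := pow_nonneg hp0 3
  linarith

lemma lemCase (p q : ℝ) (hp : 1 ≤ p) (hcase : q = p + 1 ∨ q = p + 2 ∨ p + 3 ≤ q) :
    (4 * (p - q) * (4 * (p ^ 2 + q ^ 2) + 8 * p * q - 7 * (p + q) + 12))
      + 3 * (12 * (p + q) ^ 2) ≤ 0 ∨
    (4 * (p - q) * (4 * (p ^ 2 + q ^ 2) + 8 * p * q - 7 * (p + q) + 12)) ^ 2
      < 3 * (4 * (8 * (p ^ 3 + q ^ 3) - 23 * (p ^ 2 + q ^ 2) - 6 * p * q + 24 * (p + q)))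
        * (12 * (p + q) ^ 2) := by
  have hu : (0:ℝ) ≤ p - 1 := by linarith
  have h2 := pow_nonneg hu 2
  have h3 := pow_nonneg hu 3
  have h4 := pow_nonneg hu 4
  have h5 := pow_nonneg hu 5
  rcases hcase with rfl1 | rfl1 | hge
  · right
    subst rfl1
    have hid : 3 * (4 * (8 * (p ^ 3 + (p+1) ^ 3) - 23 * (p ^ 2 + (p+1) ^ 2) - 6 * p * (p+1) + 24 * (p + (p+1))))
        * (12 * (p + (p+1)) ^ 2)
        - (4 * (p - (p+1)) * (4 * (p ^ 2 + (p+1) ^ 2) + 8 * p * (p+1) - 7 * (p + (p+1)) + 12)) ^ 2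
        = 10368 + 15552 * (p-1) + 24128 * (p-1)^2 + 44800 * (p-1)^3 + 35072 * (p-1)^4 + 9216 * (p-1)^5 := by
      ring
    nlinarith [hid, hu, h2, h3, h4, h5]
  · right
    subst rfl1
    have hid : 3 * (4 * (8 * (p ^ 3 + (p+2) ^ 3) - 23 * (p ^ 2 + (p+2) ^ 2) - 6 * p * (p+2) + 24 * (p + (p+2))))
        * (12 * (p + (p+2)) ^ 2)
        - (4 * (p - (p+2)) * (4 * (p ^ 2 + (p+2) ^ 2) + 8 * p * (p+2) - 7 * (p + (p+2)) + 12)) ^ 2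
        = 18432 + 43008 * (p-1) + 68864 * (p-1)^2 + 81920 * (p-1)^3 + 45824 * (p-1)^4 + 9216 * (p-1)^5 := by
      ring
    nlinarith [hid, hu, h2, h3, h4, h5]
  · left
    have hp0 : (0:ℝ) ≤ p := by linarith
    have ht : (0:ℝ) ≤ q - p - 3 := by linarith
    have hid : (4 * (p - q) * (4 * (p ^ 2 + q ^ 2) + 8 * p * q - 7 * (p + q) + 12))
        + 3 * (12 * (p + q) ^ 2)
        = 24 * p - 48 * p ^ 2 - 96 * (q - p - 3) - 80 * (q - p - 3) ^ 2 - 16 * (q - p - 3) ^ 3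
          - 184 * (p * (q - p - 3)) - 64 * (p * (q - p - 3) ^ 2) - 64 * (p ^ 2 * (q - p - 3)) := by
      ring
    rw [hid]
    have hpp : p ≤ p ^ 2 := by nlinarith
    have m1 := pow_nonneg ht 2
    have m2 := pow_nonneg ht 3
    have m3 := mul_nonneg hp0 ht
    have m4 := mul_nonneg hp0 (pow_nonneg ht 2)
    have m5 := mul_nonneg (pow_nonneg hp0 2) ht
    linarith

theorem stmt_18 (m₁ m₂ : ℕ) (h₁ : 0 < m₁) (h₁₂ : m₁ < m₂)
    (A : ℝ → ℝ)
    (hA : ∀ y : ℝ, A y =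
      4 * ((m₁ : ℝ) - m₂) * (4 * ((m₁ : ℝ) ^ 2 + (m₂ : ℝ) ^ 2) - 13 * ((m₁ : ℝ) + m₂) + 12)
      + 4 * (8 * ((m₁ : ℝ) ^ 3 + (m₂ : ℝ) ^ 3) - 23 * ((m₁ : ℝ) ^ 2 + (m₂ : ℝ) ^ 2)
          - 6 * (m₁ : ℝ) * m₂ + 24 * ((m₁ : ℝ) + m₂)) * y
      + 4 * ((m₁ : ℝ) - m₂) * (4 * ((m₁ : ℝ) ^ 2 + (m₂ : ℝ) ^ 2) + 8 * (m₁ : ℝ) * m₂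
          - 7 * ((m₁ : ℝ) + m₂) + 12) * y ^ 2
      + 12 * ((m₁ : ℝ) + m₂) ^ 2 * y ^ 3) :
    ∃! y : ℝ, y ∈ Set.Ioo (-1 : ℝ) 1 ∧ A y = 0 := by
  have hp : (1 : ℝ) ≤ (m₁ : ℝ) := by exact_mod_cast h₁
  have hq1 : (m₁ : ℝ) + 1 ≤ (m₂ : ℝ) := by exact_mod_cast h₁₂
  have hS := lemS (m₁ : ℝ) (m₂ : ℝ) hp
  have hApos : 0 < A 1 := by rw [hA 1]; nlinarith [hS]
  have hAneg : A (-1) < 0 := by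
    rw [hA (-1)]
    nlinarith [lemNeg (m₁ : ℝ) (m₂ : ℝ) hp hq1]
  have hcont : Continuous A := by
    have hfe : A = fun y : ℝ =>
      4 * ((m₁ : ℝ) - m₂) * (4 * ((m₁ : ℝ) ^ 2 + (m₂ : ℝ) ^ 2) - 13 * ((m₁ : ℝ) + m₂) + 12)
      + 4 * (8 * ((m₁ : ℝ) ^ 3 + (m₂ : ℝ) ^ 3) - 23 * ((m₁ : ℝ) ^ 2 + (m₂ : ℝ) ^ 2)
          - 6 * (m₁ : ℝ) * m₂ + 24 * ((m₁ : ℝ) + m₂)) * y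
      + 4 * ((m₁ : ℝ) - m₂) * (4 * ((m₁ : ℝ) ^ 2 + (m₂ : ℝ) ^ 2) + 8 * (m₁ : ℝ) * m₂
          - 7 * ((m₁ : ℝ) + m₂) + 12) * y ^ 2
      + 12 * ((m₁ : ℝ) + m₂) ^ 2 * y ^ 3 := funext hA
    rw [hfe]
    continuity
  have hcases : (m₂ : ℝ) = (m₁ : ℝ) + 1 ∨ (m₂ : ℝ) = (m₁ : ℝ) + 2 ∨ (m₁ : ℝ) + 3 ≤ (m₂ : ℝ) := by
    rcases (by omega : m₂ = m₁ + 1 ∨ m₂ = m₁ + 2 ∨ m₁ + 3 ≤ m₂) with h | h | h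
    · left; rw [h]; push_cast; ring
    · right; left; rw [h]; push_cast; ring
    · right; right; exact_mod_cast h
  have hcase := lemCase (m₁ : ℝ) (m₂ : ℝ) hp hcases
  have hsub : Set.Ioo (A (-1)) (A 1) ⊆ A '' Set.Ioo (-1 : ℝ) 1 :=
    intermediate_value_Ioo (by norm_num) hcont.continuousOn
  obtain ⟨y, hy, hAy⟩ := hsub ⟨hAneg, hApos⟩
  have huniq : ∀ y1 y2 : ℝ, y1 ∈ Set.Ioo (-1 : ℝ) 1 → y2 ∈ Set.Ioo (-1 : ℝ) 1 →
      A y1 = 0 → A y2 = 0 → y1 < y2 → False := by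
    intro y1 y2 hy1 hy2 hz1 hz2 hlt
    refine cubic_two_roots_false
      (4 * ((m₁ : ℝ) - m₂) * (4 * ((m₁ : ℝ) ^ 2 + (m₂ : ℝ) ^ 2) - 13 * ((m₁ : ℝ) + m₂) + 12))
      (4 * (8 * ((m₁ : ℝ) ^ 3 + (m₂ : ℝ) ^ 3) - 23 * ((m₁ : ℝ) ^ 2 + (m₂ : ℝ) ^ 2)
          - 6 * (m₁ : ℝ) * m₂ + 24 * ((m₁ : ℝ) + m₂)))
      (4 * ((m₁ : ℝ) - m₂) * (4 * ((m₁ : ℝ) ^ 2 + (m₂ : ℝ) ^ 2) + 8 * (m₁ : ℝ) * m₂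
          - 7 * ((m₁ : ℝ) + m₂) + 12))
      (12 * ((m₁ : ℝ) + m₂) ^ 2)
      y1 y2 (by positivity) ?_ ?_ hy2.2 hlt ?_ hcase
    · linear_combination hz1 - hA y1
    · linear_combination hz2 - hA y2
    · nlinarith [hS]
  refine ⟨y, ⟨hy, hAy⟩, ?_⟩
  rintro z ⟨hz, hAz⟩
  rcases lt_trichotomy z y with h | h | h
  · exact absurd (huniq z y hz hy hAz hAy h) (by simp)
  · exact h
  · exact absurd (huniq y z hy hz hAy hAz h) (by simp)
end
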